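/- arXiv:2006.01911 — 2 statements merged into one kernel-verified Lean document; each statement's English description precedes it below -/
import Mathlib

section
/- Under the same kernel hypotheses, if ‖κ_t(0,·,f)‖ ≤ C(t)(1 + |f(0)|) and ‖∂_x κ_t(x,·,f)‖ ≤ C(t)|f'(x)| for all f ∈ H_α, then ‖σ_t(f)‖_{L(H,H_α)} ≤ √2 C(t)(1 + ‖f‖_α). -/
open MeasureTheory Set

lemma cs_integral {X : Type*} {m : MeasurableSpace X} {μ : Measure X} {f g : X → ℝ}
    (hf : MemLp f 2 μ) (hg : MemLp g 2 μ) :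
    (∫ a, f a * g a ∂μ) ^ 2 ≤ (∫ a, f a ^ 2 ∂μ) * (∫ a, g a ^ 2 ∂μ) := by
  have hpq : (2:ℝ).HolderConjugate 2 := Real.holderConjugate_iff.mpr ⟨one_lt_two, by norm_num⟩
  have hf2 : MemLp f (ENNReal.ofReal 2) μ := by simpa [ENNReal.ofReal_ofNat] using hf
  have hg2 : MemLp g (ENNReal.ofReal 2) μ := by simpa [ENNReal.ofReal_ofNat] using hg
  have key := integral_mul_norm_le_Lp_mul_Lq hpq hf2 hg2
  have e1 : ∀ (u : X → ℝ), (∫ a, ‖u a‖ ^ (2:ℝ) ∂μ) = ∫ a, u a ^ 2 ∂μ := by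
    intro u
    refine integral_congr_ae (Filter.Eventually.of_forall fun a => ?_)
    show ‖u a‖ ^ (2:ℝ) = u a ^ 2
    rw [Real.norm_eq_abs, show (2:ℝ) = ((2:ℕ):ℝ) by norm_num, Real.rpow_natCast, sq_abs]
  have hfnn : 0 ≤ ∫ a, f a ^ 2 ∂μ := integral_nonneg fun a => sq_nonneg _
  have hgnn : 0 ≤ ∫ a, g a ^ 2 ∂μ := integral_nonneg fun a => sq_nonneg _
  have key2 : ∫ a, |f a * g a| ∂μ ≤ Real.sqrt (∫ a, f a ^ 2 ∂μ) * Real.sqrt (∫ a, g a ^ 2 ∂μ) := by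
    have : (∫ a, |f a * g a| ∂μ) = ∫ a, ‖f a‖ * ‖g a‖ ∂μ := by
      refine integral_congr_ae (Filter.Eventually.of_forall fun a => ?_)
      show |f a * g a| = ‖f a‖ * ‖g a‖
      rw [abs_mul, Real.norm_eq_abs, Real.norm_eq_abs]
    rw [this, Real.sqrt_eq_rpow, Real.sqrt_eq_rpow, ← e1 f, ← e1 g]
    exact key
  have habs : |∫ a, f a * g a ∂μ| ≤ Real.sqrt (∫ a, f a ^ 2 ∂μ) * Real.sqrt (∫ a, g a ^ 2 ∂μ) :=
    le_trans (by simpa only [Real.norm_eq_abs] using norm_integral_le_integral_norm (fun a => f a * g a) (μ := μ)) key2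
  calc (∫ a, f a * g a ∂μ) ^ 2 = |∫ a, f a * g a ∂μ| ^ 2 := (sq_abs _).symm
    _ ≤ (Real.sqrt (∫ a, f a ^ 2 ∂μ) * Real.sqrt (∫ a, g a ^ 2 ∂μ)) ^ 2 :=
        pow_le_pow_left₀ (abs_nonneg _) habs 2
    _ = (∫ a, f a ^ 2 ∂μ) * (∫ a, g a ^ 2 ∂μ) := by
        rw [mul_pow, Real.sq_sqrt hfnn, Real.sq_sqrt hgnn]

/-- Linear growth of the state-dependent integral volatility operator: if
`‖κ(0,·,f)‖_{L²(O)} ≤ C(1+|f(0)|)` and `‖∂_x κ(x,·,f)‖_{L²(O)} ≤ C|f'(x)|`, then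
`‖σ(f)‖_{L(H,H_α)} ≤ √2 C (1 + ‖f‖_α)`, expressed as: for every `h ∈ L²(O)` the
`H_α`-norm of `σ(f)h` is at most `√2 C (1 + ‖f‖_α) ‖h‖_{L²}`. A state `f ∈ H_α`
is represented by the pair `(f, f')`, `σ(f)h = ∫_O κ(·,y,f)h(y)dy` with derivative
`x ↦ ∫_O D(x,y,f)h(y)dy` where `D = ∂_x κ`. -/
theorem integral_kernel_operator_linear_growth
    (α : ℝ → ℝ) (hα1 : ∀ x ∈ Set.Ici (0:ℝ), 1 ≤ α x)
    (O : Set ℝ) (hO : MeasurableSet O)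
    (κ D : (ℝ → ℝ) → (ℝ → ℝ) → ℝ → ℝ → ℝ)
    (C : ℝ) (hC : 0 ≤ C)
    (f f' : ℝ → ℝ)
    -- f ∈ H_α
    (hf : IntegrableOn (fun x => f' x ^ 2 * α x) (Set.Ici 0))
    -- growth conditions on the kernel (squared L²(O) bounds)
    (hg0 : (∫ y in O, (κ f f' 0 y) ^ 2) ≤ C ^ 2 * (1 + |f 0|) ^ 2)
    (hgD : ∀ x ∈ Set.Ici (0:ℝ),
      (∫ y in O, (D f f' x y) ^ 2) ≤ C ^ 2 * (f' x) ^ 2)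
    (hκL2 : ∀ x ∈ Set.Ici (0:ℝ),
      MemLp (κ f f' x) 2 (volume.restrict O) ∧ MemLp (D f f' x) 2 (volume.restrict O)) :
    ∀ h : ℝ → ℝ, MemLp h 2 (volume.restrict O) →
      Real.sqrt ((∫ y in O, κ f f' 0 y * h y) ^ 2
          + ∫ x in Set.Ici (0:ℝ), (∫ y in O, D f f' x y * h y) ^ 2 * α x)
        ≤ Real.sqrt 2 * C
          * (1 + Real.sqrt ((f 0) ^ 2 + ∫ x in Set.Ici (0:ℝ), f' x ^ 2 * α x))
          * Real.sqrt (∫ y in O, h y ^ 2) := by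
  intro h hh
  set N := ∫ y in O, h y ^ 2 with hNdef
  have hN : 0 ≤ N := setIntegral_nonneg hO fun y _ => sq_nonneg _
  set I := ∫ x in Set.Ici (0:ℝ), f' x ^ 2 * α x with hIdef
  have hαnn : ∀ x ∈ Set.Ici (0:ℝ), 0 ≤ α x := fun x hx => le_trans zero_le_one (hα1 x hx)
  have hI : 0 ≤ I := setIntegral_nonneg measurableSet_Ici fun x hx =>
    mul_nonneg (sq_nonneg _) (hαnn x hx)
  -- bound on the first term
  have hA : (∫ y in O, κ f f' 0 y * h y) ^ 2 ≤ C ^ 2 * (1 + |f 0|) ^ 2 * N := by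
    calc (∫ y in O, κ f f' 0 y * h y) ^ 2
        ≤ (∫ y in O, (κ f f' 0 y) ^ 2) * N :=
          cs_integral ((hκL2 0 self_mem_Ici).1) hh
      _ ≤ C ^ 2 * (1 + |f 0|) ^ 2 * N := mul_le_mul_of_nonneg_right hg0 hN
  -- bound on the second term
  have hB : (∫ x in Set.Ici (0:ℝ), (∫ y in O, D f f' x y * h y) ^ 2 * α x)
      ≤ C ^ 2 * N * I := by
    have hub : Integrable (fun x => C ^ 2 * N * (f' x ^ 2 * α x)) (volume.restrict (Set.Ici 0)) :=
      hf.const_mul _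
    have h1 : (∫ x in Set.Ici (0:ℝ), (∫ y in O, D f f' x y * h y) ^ 2 * α x)
        ≤ ∫ x in Set.Ici (0:ℝ), C ^ 2 * N * (f' x ^ 2 * α x) := by
      refine integral_mono_of_nonneg ?_ hub ?_
      · refine (ae_restrict_iff' measurableSet_Ici).2 (Filter.Eventually.of_forall fun x hx => ?_)
        exact mul_nonneg (sq_nonneg _) (hαnn x hx)
      · refine (ae_restrict_iff' measurableSet_Ici).2 (Filter.Eventually.of_forall fun x hx => ?_)
        have hcs : (∫ y in O, D f f' x y * h y) ^ 2 ≤ (∫ y in O, (D f f' x y) ^ 2) * N :=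
          cs_integral ((hκL2 x hx).2) hh
        have h2 : (∫ y in O, (D f f' x y) ^ 2) * N ≤ C ^ 2 * (f' x) ^ 2 * N :=
          mul_le_mul_of_nonneg_right (hgD x hx) hN
        have h3 : (∫ y in O, D f f' x y * h y) ^ 2 * α x ≤ C ^ 2 * (f' x) ^ 2 * N * α x :=
          mul_le_mul_of_nonneg_right (le_trans hcs h2) (hαnn x hx)
        calc (∫ y in O, D f f' x y * h y) ^ 2 * α x ≤ C ^ 2 * (f' x) ^ 2 * N * α x := h3
          _ = C ^ 2 * N * (f' x ^ 2 * α x) := by ring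
    calc (∫ x in Set.Ici (0:ℝ), (∫ y in O, D f f' x y * h y) ^ 2 * α x)
        ≤ ∫ x in Set.Ici (0:ℝ), C ^ 2 * N * (f' x ^ 2 * α x) := h1
      _ = C ^ 2 * N * I := by rw [integral_const_mul]
  set S := Real.sqrt ((f 0) ^ 2 + I) with hSdef
  have hS : 0 ≤ S := Real.sqrt_nonneg _
  have hS2 : S ^ 2 = (f 0) ^ 2 + I := Real.sq_sqrt (by positivity)
  have hkey : (1 + |f 0|) ^ 2 + I ≤ 2 * (1 + S) ^ 2 := by
    nlinarith [sq_nonneg (|f 0| - 1), sq_abs (f 0), abs_nonneg (f 0)]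
  have hsum : (∫ y in O, κ f f' 0 y * h y) ^ 2
      + (∫ x in Set.Ici (0:ℝ), (∫ y in O, D f f' x y * h y) ^ 2 * α x)
      ≤ 2 * C ^ 2 * (1 + S) ^ 2 * N := by
    calc (∫ y in O, κ f f' 0 y * h y) ^ 2
        + (∫ x in Set.Ici (0:ℝ), (∫ y in O, D f f' x y * h y) ^ 2 * α x)
        ≤ C ^ 2 * (1 + |f 0|) ^ 2 * N + C ^ 2 * N * I := add_le_add hA hB
      _ = C ^ 2 * N * ((1 + |f 0|) ^ 2 + I) := by ring
      _ ≤ C ^ 2 * N * (2 * (1 + S) ^ 2) :=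
          mul_le_mul_of_nonneg_left hkey (by positivity)
      _ = 2 * C ^ 2 * (1 + S) ^ 2 * N := by ring
  have := Real.sqrt_le_sqrt hsum
  refine le_trans this (le_of_eq ?_)
  rw [show (2 : ℝ) * C ^ 2 * (1 + S) ^ 2 * N = 2 * (C ^ 2 * ((1 + S) ^ 2 * N)) by ring,
    Real.sqrt_mul (by norm_num), Real.sqrt_mul (sq_nonneg C),
    Real.sqrt_mul (sq_nonneg _), Real.sqrt_sq hC, Real.sqrt_sq (by positivity : (0:ℝ) ≤ 1 + S)]
  ring
end

section
/- For ω(x) = (1−|x|)·1_{|x|≤1}, b > 0, and 0 < ℓ ≤ 1, the cross-term integral ∫_ℝ (bω(c−z) + ω'(c−z))(bω(c+ℓ−z) + ω'(c+ℓ−z)) dz equals (b²/6)(3(ℓ−2)ℓ² + 4) − 3ℓ + 2, independently of c ∈ ℝ. -/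
open MeasureTheory

private lemma quad_prim (p q r a u : ℝ) (hau : a ≤ u) :
    ∫ x in a..u, (p + q * x + r * x ^ 2) =
      (p * u + q * u ^ 2 / 2 + r * u ^ 3 / 3) - (p * a + q * a ^ 2 / 2 + r * a ^ 3 / 3) := by
  have hF : ∀ x : ℝ, HasDerivAt (fun y : ℝ => p * y + q * y ^ 2 / 2 + r * y ^ 3 / 3)
      (p + q * x + r * x ^ 2) x := by
    intro x
    have h1 : HasDerivAt (fun y : ℝ => p * y) p x := by
      simpa using (hasDerivAt_id x).const_mul p
    have h2 : HasDerivAt (fun y : ℝ => q * y ^ 2 / 2) (q * x) x := by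
      have := ((hasDerivAt_pow 2 x).const_mul q).div_const 2
      refine this.congr_deriv ?_; ring
    have h3 : HasDerivAt (fun y : ℝ => r * y ^ 3 / 3) (r * x ^ 2) x := by
      have := ((hasDerivAt_pow 3 x).const_mul r).div_const 3
      refine this.congr_deriv ?_; ring
    exact (h1.add h2).add h3
  rw [intervalIntegral.integral_eq_sub_of_hasDerivAt (fun x _ => hF x)]
  have hc : Continuous fun x : ℝ => p + q * x + r * x ^ 2 := by continuity
  exact hc.intervalIntegrable a u

private lemma piece (H : ℝ → ℝ) (p q r a u : ℝ) (hau : a ≤ u)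
    (heq : Set.EqOn H (fun x => p + q * x + r * x ^ 2) (Set.Ioo a u)) :
    IntervalIntegrable H volume a u ∧
    ∫ x in a..u, H x =
      (p * u + q * u ^ 2 / 2 + r * u ^ 3 / 3) - (p * a + q * a ^ 2 / 2 + r * a ^ 3 / 3) := by
  have hcont : Continuous fun x : ℝ => p + q * x + r * x ^ 2 := by continuity
  have hpoly : IntegrableOn (fun x => p + q * x + r * x ^ 2) (Set.Ioo a u) volume :=
    (hcont.integrableOn_Icc (a := a) (b := u)).mono_set Set.Ioo_subset_Icc_self
  have hint : IntervalIntegrable H volume a u := by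
    rw [intervalIntegrable_iff_integrableOn_Ioo_of_le hau]
    exact hpoly.congr_fun heq.symm measurableSet_Ioo
  refine ⟨hint, ?_⟩
  rw [intervalIntegral.integral_of_le hau, integral_Ioc_eq_integral_Ioo,
    setIntegral_congr_fun measurableSet_Ioo heq, ← integral_Ioc_eq_integral_Ioo,
    ← intervalIntegral.integral_of_le hau, quad_prim p q r a u hau]

/-- Cross-term integral for the triangular weight: for `b > 0`, `0 < ℓ ≤ 1` and any `c`,
`∫_ℝ (bω(c-z) + ω'(c-z))(bω(c+ℓ-z) + ω'(c+ℓ-z)) dz = (b²/6)(3(ℓ-2)ℓ² + 4) - 3ℓ + 2`. -/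
theorem triangular_weight_cross_integral
    (b ℓ c : ℝ) (hb : 0 < b) (hℓ0 : 0 < ℓ) (hℓ1 : ℓ ≤ 1) :
    (∫ z : ℝ,
        (b * (if |c - z| ≤ 1 then 1 - |c - z| else 0)
          + (if |c - z| < 1 then -Real.sign (c - z) else 0))
        * (b * (if |c + ℓ - z| ≤ 1 then 1 - |c + ℓ - z| else 0)
          + (if |c + ℓ - z| < 1 then -Real.sign (c + ℓ - z) else 0)))
      = (b ^ 2 / 6) * (3 * (ℓ - 2) * ℓ ^ 2 + 4) - 3 * ℓ + 2 := by
  set H : ℝ → ℝ := fun u =>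
      (b * (if |u| ≤ 1 then 1 - |u| else 0) + (if |u| < 1 then -Real.sign u else 0))
      * (b * (if |u + ℓ| ≤ 1 then 1 - |u + ℓ| else 0)
          + (if |u + ℓ| < 1 then -Real.sign (u + ℓ) else 0)) with hH
  have hcomp : (∫ z : ℝ,
        (b * (if |c - z| ≤ 1 then 1 - |c - z| else 0)
          + (if |c - z| < 1 then -Real.sign (c - z) else 0))
        * (b * (if |c + ℓ - z| ≤ 1 then 1 - |c + ℓ - z| else 0)
          + (if |c + ℓ - z| < 1 then -Real.sign (c + ℓ - z) else 0)))
      = ∫ u : ℝ, H u := by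
    rw [← integral_sub_left_eq_self H volume c]
    congr 1
    funext z
    have e : c + ℓ - z = (c - z) + ℓ := by ring
    rw [hH, e]
  rw [hcomp]
  -- the three pieces
  have h1 : Set.EqOn H
      (fun x => (b + 1) * (b + b * ℓ + 1) + b * (2 * b + b * ℓ + 2) * x + b ^ 2 * x ^ 2)
      (Set.Ioo (-1) (-ℓ)) := by
    intro x hx
    obtain ⟨hx1, hx2⟩ := hx
    have hxneg : x < 0 := lt_of_lt_of_le hx2 (by linarith)
    have hax : |x| < 1 := by rw [abs_of_neg hxneg]; linarith
    have hy : x + ℓ < 0 := by linarith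
    have hay : |x + ℓ| < 1 := by rw [abs_of_neg hy]; linarith
    simp only [hH, abs_of_neg hxneg, abs_of_neg hy, Real.sign_of_neg hxneg,
      Real.sign_of_neg hy]
    split_ifs <;> (first | ring1 | (exfalso; linarith))
  have h2 : Set.EqOn H
      (fun x => (b + 1) * (b - b * ℓ - 1) + (b * (b - b * ℓ - 1) - b * (b + 1)) * x
        + (-(b ^ 2)) * x ^ 2)
      (Set.Ioo (-ℓ) 0) := by
    intro x hx
    obtain ⟨hx1, hx2⟩ := hx
    have hax : |x| < 1 := by rw [abs_of_neg hx2]; linarith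
    have hy : 0 < x + ℓ := by linarith
    have hay : |x + ℓ| < 1 := by rw [abs_of_pos hy]; linarith
    simp only [hH, abs_of_neg hx2, abs_of_pos hy, Real.sign_of_neg hx2,
      Real.sign_of_pos hy]
    split_ifs <;> (first | ring1 | (exfalso; linarith))
  have h3 : Set.EqOn H
      (fun x => (b - 1) * (b - b * ℓ - 1) + (-(b * (b - b * ℓ - 1)) - b * (b - 1)) * x
        + b ^ 2 * x ^ 2)
      (Set.Ioo 0 (1 - ℓ)) := by
    intro x hx
    obtain ⟨hx1, hx2⟩ := hx
    have hax : |x| < 1 := by rw [abs_of_pos hx1]; linarith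
    have hy : 0 < x + ℓ := by linarith
    have hay : |x + ℓ| < 1 := by rw [abs_of_pos hy]; linarith
    simp only [hH, abs_of_pos hx1, abs_of_pos hy, Real.sign_of_pos hx1,
      Real.sign_of_pos hy]
    split_ifs <;> (first | ring1 | (exfalso; linarith))
  have ha1 : (-1 : ℝ) ≤ -ℓ := by linarith
  have ha2 : (-ℓ : ℝ) ≤ 0 := by linarith
  have ha3 : (0 : ℝ) ≤ 1 - ℓ := by linarith
  obtain ⟨hi1, he1⟩ := piece H _ _ _ _ _ ha1 h1
  obtain ⟨hi2, he2⟩ := piece H _ _ _ _ _ ha2 h2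
  obtain ⟨hi3, he3⟩ := piece H _ _ _ _ _ ha3 h3
  -- reduce whole-line integral to the interval [-1, 1-ℓ]
  have hle : (-1 : ℝ) ≤ 1 - ℓ := by linarith
  have hres : (∫ u : ℝ, H u) = ∫ u in (-1 : ℝ)..(1 - ℓ), H u := by
    rw [intervalIntegral.integral_of_le hle,
      ← setIntegral_eq_integral_of_forall_compl_eq_zero (s := Set.Ioc (-1 : ℝ) (1 - ℓ))]
    intro u hu
    by_cases hcase : u ≤ -1
    · rcases eq_or_lt_of_le hcase with hcase | hcase
      · subst hcase
        norm_num [hH]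
      · have h1' : ¬ |u| ≤ 1 := by rw [abs_le]; push_neg; intro h; linarith
        have h2' : ¬ |u| < 1 := fun h => h1' h.le
        simp [hH, h1', h2']
    · push_neg at hcase
      have hgt : 1 - ℓ < u := by
        by_contra hcon
        push_neg at hcon
        exact hu ⟨hcase, hcon⟩
      have h1' : ¬ |u + ℓ| ≤ 1 := by rw [abs_le]; push_neg; intro h; linarith
      have h2' : ¬ |u + ℓ| < 1 := fun h => h1' h.le
      simp [hH, h1', h2']
  rw [hres]
  have hsplit : (∫ u in (-1 : ℝ)..(1 - ℓ), H u)
      = (∫ u in (-1 : ℝ)..(-ℓ), H u) + (∫ u in (-ℓ : ℝ)..(0 : ℝ), H u)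
        + (∫ u in (0 : ℝ)..(1 - ℓ), H u) := by
    rw [intervalIntegral.integral_add_adjacent_intervals hi1 hi2,
      intervalIntegral.integral_add_adjacent_intervals (hi1.trans hi2) hi3]
  rw [hsplit, he1, he2, he3]
  ring
end
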